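/- arXiv:1711.06399 — 4 statements merged into one kernel-verified Lean document; each statement's English description precedes it below -/
import Mathlib

section
/- Let n ≥ 1 and let I : Fin n → Fin n → Bool be an 'interference' relation with I i i = true for all i. Define c_i = #{j : I i j = true}, d_{ij} = 1 if there exists ℓ with I ℓ i = true and I ℓ j = true (else 0), D_avg = (1/n) ∑_i ∑_j d_{ij}, C₁ = (1/n) ∑_i c_i, C₂² = (1/n) ∑_i c_i², and C∞ = max_i c_i. Then C₁ ≤ D_avg and D_avg ≤ C₂² and C₂² ≤ C∞². -/
open Finset

theorem stmt_0 (n : ℕ) (hn : 1 ≤ n) (I : Fin n → Fin n → Bool)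
    (hI : ∀ i, I i i = true) :
    let c : Fin n → ℕ := fun i => (Finset.univ.filter (fun j => I i j = true)).card
    let d : Fin n → Fin n → ℕ := fun i j =>
      if ∃ ℓ, I ℓ i = true ∧ I ℓ j = true then 1 else 0
    let Davg : ℝ := (∑ i, ∑ j, (d i j : ℝ)) / n
    (∑ i, (c i : ℝ)) / n ≤ Davg ∧
      Davg ≤ (∑ i, (c i : ℝ) ^ 2) / n ∧
        (∑ i, (c i : ℝ) ^ 2) / n ≤ ((Finset.univ.sup c : ℕ) : ℝ) ^ 2 := by
  intro c d Davg
  have hn0 : (0 : ℝ) < n := by exact_mod_cast hn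
  have hc : ∀ i, c i = ∑ j, if I i j = true then 1 else 0 := by
    intro i; exact Finset.card_filter _ _
  have key1 : ∑ i, c i ≤ ∑ i, ∑ j, d i j := by
    refine Finset.sum_le_sum fun i _ => ?_
    rw [hc i]
    refine Finset.sum_le_sum fun j _ => ?_
    simp only [d]
    split_ifs with h1 h2
    · exact le_refl 1
    · exact absurd ⟨i, hI i, h1⟩ h2
    · exact Nat.zero_le _
    · exact le_refl 0
  have key2 : ∑ i, ∑ j, d i j ≤ ∑ ℓ, c ℓ * c ℓ := by
    have hd : ∀ i j, d i j ≤
        ∑ ℓ, (if I ℓ i = true then 1 else 0) * (if I ℓ j = true then 1 else 0) := by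
      intro i j
      simp only [d]
      split_ifs with h
      · obtain ⟨ℓ, h1, h2⟩ := h
        have : (1 : ℕ) = (if I ℓ i = true then 1 else 0) * (if I ℓ j = true then 1 else 0) := by
          simp [h1, h2]
        refine le_trans (le_of_eq this) ?_
        exact Finset.single_le_sum (f := fun ℓ =>
          (if I ℓ i = true then 1 else 0) * (if I ℓ j = true then 1 else 0))
          (fun _ _ => Nat.zero_le _) (Finset.mem_univ ℓ)
      · exact Nat.zero_le _
    calc ∑ i, ∑ j, d i j
        ≤ ∑ i, ∑ j, ∑ ℓ, (if I ℓ i = true then 1 else 0) * (if I ℓ j = true then 1 else 0) :=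
          Finset.sum_le_sum fun i _ => Finset.sum_le_sum fun j _ => hd i j
      _ = ∑ ℓ, ∑ i, ∑ j, (if I ℓ i = true then 1 else 0) * (if I ℓ j = true then 1 else 0) := by
          rw [show (∑ i, ∑ j, ∑ ℓ, ((if I ℓ i = true then 1 else 0) *
              (if I ℓ j = true then 1 else 0) : ℕ)) =
              ∑ i, ∑ ℓ, ∑ j, ((if I ℓ i = true then 1 else 0) *
              (if I ℓ j = true then 1 else 0) : ℕ) from
            Finset.sum_congr rfl fun i _ => Finset.sum_comm, Finset.sum_comm]
      _ = ∑ ℓ, c ℓ * c ℓ := by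
          refine Finset.sum_congr rfl fun ℓ _ => ?_
          rw [hc ℓ, ← Finset.sum_mul_sum]
  have key3 : ∀ i, c i ≤ Finset.univ.sup c := fun i => Finset.le_sup (Finset.mem_univ i)
  refine ⟨?_, ?_, ?_⟩
  · apply div_le_div_of_nonneg_right ?_ hn0.le
    exact_mod_cast key1
  · apply div_le_div_of_nonneg_right ?_ hn0.le
    have : (∑ i, ∑ j, (d i j : ℝ)) ≤ ∑ ℓ, (c ℓ : ℝ) * (c ℓ : ℝ) := by exact_mod_cast key2
    calc (∑ i, ∑ j, (d i j : ℝ)) ≤ ∑ ℓ, (c ℓ : ℝ) * (c ℓ : ℝ) := this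
      _ = ∑ i, (c i : ℝ) ^ 2 := by simp [sq]
  · rw [div_le_iff₀ hn0]
    have h : ∑ i, (c i : ℝ) ^ 2 ≤ ∑ _i : Fin n, ((Finset.univ.sup c : ℕ) : ℝ) ^ 2 := by
      refine Finset.sum_le_sum fun i _ => ?_
      have h2 : (c i : ℝ) ≤ ((Finset.univ.sup c : ℕ) : ℝ) := by exact_mod_cast key3 i
      exact pow_le_pow_left₀ (by positivity) h2 2
    simpa [Finset.sum_const, Finset.card_univ, mul_comm] using h
end

section
/- Let ρ : Fin n → Fin n be an involution without fixed points (a pairing), and I an interference relation with I i i = true. Define e_{ij} = 1 if d_{ij} = 0 and there exists ℓ with I ℓ i = true and I ρ(ℓ) j = true, else 0, where d_{ij} is the interference-dependence indicator. Then E_avg := (1/n) ∑_i ∑_j e_{ij} ≤ (1/n) ∑_ℓ c_ℓ² where c_ℓ = #{i : I ℓ i = true}. -/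
open Finset

theorem stmt_2 (n : ℕ) (hn : 1 ≤ n) (I : Fin n → Fin n → Bool)
    (hI : ∀ i, I i i = true) (ρ : Fin n → Fin n)
    (hρinvol : ∀ i, ρ (ρ i) = i) (hρfix : ∀ i, ρ i ≠ i) :
    let c : Fin n → ℕ := fun ℓ => (Finset.univ.filter (fun i => I ℓ i = true)).card
    let d : Fin n → Fin n → ℕ := fun i j =>
      if ∃ ℓ, I ℓ i = true ∧ I ℓ j = true then 1 else 0
    let e : Fin n → Fin n → ℕ := fun i j =>
      if d i j = 0 ∧ ∃ ℓ, I ℓ i = true ∧ I (ρ ℓ) j = true then 1 else 0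
    (∑ i, ∑ j, (e i j : ℝ)) / n ≤ (∑ ℓ, (c ℓ : ℝ) ^ 2) / n := by
  intro c d e
  have hc : ∀ ℓ, (∑ i, (if I ℓ i = true then 1 else 0)) = c ℓ := by
    intro ℓ
    simp only [c, Finset.card_filter]
  have key : (∑ i, ∑ j, e i j) ≤ ∑ ℓ, (c ℓ) ^ 2 := by
    have h1 : ∀ i j, e i j ≤ ∑ ℓ, (if I ℓ i = true ∧ I (ρ ℓ) j = true then 1 else 0) := by
      intro i j
      by_cases h : d i j = 0 ∧ ∃ ℓ, I ℓ i = true ∧ I (ρ ℓ) j = true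
      · have h2 : e i j = 1 := by simp only [e]; rw [if_pos h]
        obtain ⟨-, ℓ, hℓ1, hℓ2⟩ := h
        rw [h2]
        have := Finset.single_le_sum
          (f := fun ℓ => (if I ℓ i = true ∧ I (ρ ℓ) j = true then 1 else 0))
          (fun x _ => Nat.zero_le _) (Finset.mem_univ ℓ)
        simpa [hℓ1, hℓ2] using this
      · simp [e, h]
    have h2 : (∑ i, ∑ j, e i j) ≤ ∑ ℓ, c ℓ * c (ρ ℓ) := by
      calc (∑ i, ∑ j, e i j)
          ≤ ∑ i, ∑ j, ∑ ℓ, (if I ℓ i = true ∧ I (ρ ℓ) j = true then 1 else 0) :=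
            Finset.sum_le_sum fun i _ => Finset.sum_le_sum fun j _ => h1 i j
        _ = ∑ ℓ, ∑ i, ∑ j, (if I ℓ i = true ∧ I (ρ ℓ) j = true then 1 else 0) := by
            have hswap : ∀ i : Fin n, (∑ j, ∑ ℓ, (if I ℓ i = true ∧ I (ρ ℓ) j = true then 1 else 0))
                = ∑ ℓ, ∑ j, (if I ℓ i = true ∧ I (ρ ℓ) j = true then 1 else 0) :=
              fun i => Finset.sum_comm
            simp_rw [hswap]
            exact Finset.sum_comm
        _ = ∑ ℓ, c ℓ * c (ρ ℓ) := by
            refine Finset.sum_congr rfl fun ℓ _ => ?_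
            rw [← hc ℓ, ← hc (ρ ℓ), Finset.sum_mul_sum]
            refine Finset.sum_congr rfl fun i _ => Finset.sum_congr rfl fun j _ => ?_
            by_cases hi : I ℓ i = true <;> by_cases hj : I (ρ ℓ) j = true <;>
              simp [hi, hj]
    have h3 : ∑ ℓ, c ℓ * c (ρ ℓ) ≤ ∑ ℓ, (c ℓ) ^ 2 := by
      have hperm : ∑ ℓ, (c (ρ ℓ))^2 = ∑ ℓ, (c ℓ)^2 := by
        exact Fintype.sum_bijective ρ (Function.Involutive.bijective hρinvol)
          (fun ℓ => (c (ρ ℓ))^2) (fun ℓ => (c ℓ)^2) (fun x => rfl)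
      have hdouble : 2 * (∑ ℓ, c ℓ * c (ρ ℓ)) ≤ 2 * ∑ ℓ, (c ℓ)^2 := by
        calc 2 * (∑ ℓ, c ℓ * c (ρ ℓ)) = ∑ ℓ, 2 * (c ℓ * c (ρ ℓ)) := by
              rw [Finset.mul_sum]
          _ ≤ ∑ ℓ, ((c ℓ)^2 + (c (ρ ℓ))^2) := by
              refine Finset.sum_le_sum fun ℓ _ => ?_
              nlinarith [sq_nonneg (c ℓ - c (ρ ℓ)), sq_nonneg ((c ℓ : ℤ) - c (ρ ℓ))]
          _ = ∑ ℓ, (c ℓ)^2 + ∑ ℓ, (c (ρ ℓ))^2 := Finset.sum_add_distrib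
          _ = 2 * ∑ ℓ, (c ℓ)^2 := by rw [hperm]; ring
      omega
    exact h2.trans h3
  have hn0 : (0:ℝ) < n := by exact_mod_cast hn
  have hcast : (∑ i, ∑ j, (e i j:ℝ)) ≤ ∑ ℓ, (c ℓ:ℝ)^2 := by exact_mod_cast key
  exact div_le_div_of_nonneg_right hcast hn0.le
end

section
/- Under a Bernoulli design (independent Z_i with P(Z_i=1)=p_i, k⁻¹ ≤ p_i ≤ 1−k⁻¹), suppose Y_i = y_i(Z̃_i) depends only on the sub-vector of treatments of units interfering with i, that E[Y_i²] ≤ k², and d_{ij} = 0 implies Z̃_i and Z̃_j involve disjoint coordinates of Z (hence are independent). Then Var((1/n) ∑_{i=1}^n 1{Z_i=z} Y_i / P(Z_i=z)) ≤ k⁴ D_avg / n, where D_avg = (1/n) ∑_{i,j} d_{ij}. -/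
open MeasureTheory ProbabilityTheory Finset

section aux
variable {Ω : Type*} {n : ℕ}

lemma aux_factor (Z : Fin n → Ω → Bool) (S : Finset (Fin n)) (Y : Ω → ℝ)
    (hdep : ∀ ω ω', (∀ j ∈ S, Z j ω = Z j ω') → Y ω = Y ω') :
    ∃ g : (↥S → Bool) → ℝ, ∀ ω, Y ω = g (fun j => Z j ω) := by
  classical
  refine ⟨fun v => if h : ∃ ω, ∀ j : ↥S, Z j ω = v j then Y h.choose else 0, fun ω => ?_⟩
  have h : ∃ ω', ∀ j : ↥S, Z j ω' = Z (j : Fin n) ω := ⟨ω, fun _ => rfl⟩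
  simp only [dif_pos h]
  exact (hdep h.choose ω fun j hj => h.choose_spec ⟨j, hj⟩).symm

lemma aux_bdd {α : Type*} [Fintype α] (g : α → ℝ) (Y : Ω → ℝ) (r : Ω → α)
    (hg : ∀ ω, Y ω = g (r ω)) : ∃ C : ℝ, 0 ≤ C ∧ ∀ ω, |Y ω| ≤ C := by
  classical
  rcases isEmpty_or_nonempty α with h | h
  · exact ⟨0, le_refl 0, fun ω => (IsEmpty.false (r ω)).elim⟩
  · refine ⟨Finset.univ.sup' univ_nonempty fun a => |g a|, ?_, fun ω => ?_⟩
    · exact le_trans (abs_nonneg _) (Finset.le_sup' (fun a => |g a|) (mem_univ (Classical.arbitrary α)))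
    · rw [hg ω]; exact Finset.le_sup' (fun a => |g a|) (mem_univ _)

lemma aux_amgm (a b : ℝ) : a * b ≤ (a ^ 2 + b ^ 2) / 2 := by
  have h1 := sq_nonneg (a - b)
  have h2 : (a - b) ^ 2 = a ^ 2 - 2 * (a * b) + b ^ 2 := by ring
  linarith

lemma aux_alg (a b c : ℝ) : (1 / c) ^ 2 * (a * b) = a * (b / c) / c := by
  rw [← mul_div_assoc, div_div, div_pow, one_pow, div_mul_eq_mul_div, one_mul, pow_two]

end aux

theorem stmt_12 {Ω : Type*} [MeasureSpace Ω] [IsProbabilityMeasure (ℙ : Measure Ω)]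
    (n : ℕ) (Z : Fin n → Ω → Bool) (hZmeas : ∀ i, Measurable (Z i))
    (hindep : iIndepFun (m := fun _ => (inferInstance : MeasurableSpace Bool)) Z ℙ)
    (I : Fin n → Fin n → Bool) (hI : ∀ i, I i i = true)
    (Y : Fin n → Ω → ℝ) (hYmeas : ∀ i, Measurable (Y i))
    (hYdep : ∀ i ω ω', (∀ j, I j i = true → Z j ω = Z j ω') → Y i ω = Y i ω')
    (k : ℝ) (hk : 0 < k)
    (hp_lo : ∀ i, k⁻¹ ≤ (ℙ {ω | Z i ω = true}).toReal)
    (hp_hi : ∀ i, (ℙ {ω | Z i ω = true}).toReal ≤ 1 - k⁻¹)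
    (hYsq : ∀ i, ∫ ω, (Y i ω) ^ 2 ≤ k ^ 2) (z : Bool) :
    let d : Fin n → Fin n → ℕ := fun i j =>
      if ∃ ℓ, I ℓ i = true ∧ I ℓ j = true then 1 else 0
    let Davg : ℝ := (∑ i, ∑ j, (d i j : ℝ)) / n
    variance (fun ω =>
        (1 / (n : ℝ)) * ∑ i,
          (if Z i ω = z then (1 : ℝ) else 0) * Y i ω / (ℙ {ω' | Z i ω' = z}).toReal)
      ℙ ≤ k ^ 4 * Davg / n := by
  intro d Davg
  classical
  set p : Fin n → ℝ := fun i => (ℙ {ω' | Z i ω' = z}).toReal with hp_def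
  set W : Fin n → Ω → ℝ := fun i ω => (if Z i ω = z then (1:ℝ) else 0) * Y i ω / p i with hW_def
  -- probability bounds
  have hptoReal : ∀ i, (ℙ {ω | Z i ω = false}).toReal = 1 - (ℙ {ω | Z i ω = true}).toReal := by
    intro i
    have hms : MeasurableSet {ω | Z i ω = true} := hZmeas i (measurableSet_singleton true)
    have hcompl : {ω | Z i ω = false} = {ω | Z i ω = true}ᶜ := by
      ext ω; simp
    have h1 : ℙ {ω | Z i ω = true} + ℙ {ω | Z i ω = true}ᶜ = 1 := by
      rw [measure_add_measure_compl hms, measure_univ]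
    have h2 := congrArg ENNReal.toReal h1
    rw [ENNReal.toReal_add (measure_ne_top _ _) (measure_ne_top _ _), ENNReal.toReal_one] at h2
    rw [hcompl]; linarith
  have hk1 : (0:ℝ) < k⁻¹ := by positivity
  have hplo : ∀ i, k⁻¹ ≤ p i := by
    intro i
    cases z with
    | true => exact hp_lo i
    | false =>
        have : p i = (ℙ {ω | Z i ω = false}).toReal := rfl
        rw [this, hptoReal i]; linarith [hp_hi i]
  have hppos : ∀ i, 0 < p i := fun i => lt_of_lt_of_le hk1 (hplo i)
  have hinvp : ∀ i, (p i)⁻¹ ≤ k := by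
    intro i
    calc (p i)⁻¹ ≤ (k⁻¹)⁻¹ := by
          apply inv_anti₀ hk1 (hplo i)
      _ = k := inv_inv k
  -- relevant-coordinate sets
  set S : Fin n → Finset (Fin n) := fun i => Finset.univ.filter (fun j => I j i = true) with hS_def
  have hmemS : ∀ i j, j ∈ S i ↔ I j i = true := fun i j => by simp [hS_def]
  have hiS : ∀ i, i ∈ S i := fun i => (hmemS i i).2 (hI i)
  -- factor Y through the relevant coordinates
  have hfact : ∀ i, ∃ g : (↥(S i) → Bool) → ℝ, ∀ ω, Y i ω = g (fun j => Z j ω) := fun i =>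
    aux_factor Z (S i) (Y i) (fun ω ω' h => hYdep i ω ω' fun j hj => h j ((hmemS i j).2 hj))
  choose gY hgY using hfact
  set G : ∀ i, (↥(S i) → Bool) → ℝ :=
    fun i v => (if v ⟨i, hiS i⟩ = z then (1:ℝ) else 0) * gY i v / p i with hG_def
  have hWG : ∀ i ω, W i ω = G i (fun j => Z j ω) := by
    intro i ω
    simp only [hW_def, hG_def]
    rw [hgY i ω]
  have hGmeas : ∀ i, Measurable (G i) := fun i => measurable_of_countable _
  have hRmeas : ∀ i, Measurable (fun ω (j : ↥(S i)) => Z j ω) := fun i =>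
    measurable_pi_lambda _ fun j => hZmeas j
  have hWmeas : ∀ i, Measurable (W i) := by
    intro i
    have h : W i = (G i) ∘ (fun ω (j : ↥(S i)) => Z j ω) := funext fun ω => hWG i ω
    rw [h]; exact (hGmeas i).comp (hRmeas i)
  -- bounds
  have hbdd : ∀ i, ∃ C : ℝ, 0 ≤ C ∧ ∀ ω, |W i ω| ≤ C := fun i =>
    aux_bdd (G i) (W i) (fun ω (j : ↥(S i)) => Z j ω) (hWG i)
  choose C hC0 hCb using hbdd
  have hYbdd : ∀ i, ∃ CY : ℝ, 0 ≤ CY ∧ ∀ ω, |Y i ω| ≤ CY := fun i =>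
    aux_bdd (gY i) (Y i) (fun ω (j : ↥(S i)) => Z j ω) (hgY i)
  choose CY hCY0 hCYb using hYbdd
  -- integrability machinery
  have hint : ∀ (f : Ω → ℝ) (c : ℝ), Measurable f → (∀ ω, |f ω| ≤ c) → Integrable f ℙ := by
    intro f c hf hb
    exact Integrable.mono' (integrable_const c) hf.aestronglyMeasurable
      (ae_of_all _ fun ω => by simpa [Real.norm_eq_abs] using hb ω)
  have hWint : ∀ i, Integrable (W i) ℙ := fun i => hint _ _ (hWmeas i) (hCb i)
  set m : Fin n → ℝ := fun i => ∫ ω, W i ω with hm_def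
  set X : Fin n → Ω → ℝ := fun i ω => W i ω - m i with hX_def
  have hXmeas : ∀ i, Measurable (X i) := fun i => (hWmeas i).sub measurable_const
  have hXb : ∀ i ω, |X i ω| ≤ C i + |m i| := by
    intro i ω
    have h1 : |W i ω - m i| ≤ |W i ω| + |m i| := by
      calc |W i ω - m i| = |W i ω + -(m i)| := by rw [sub_eq_add_neg]
        _ ≤ |W i ω| + |-(m i)| := abs_add_le _ _
        _ = |W i ω| + |m i| := by rw [abs_neg]
    exact h1.trans (by linarith [hCb i ω])
  have hXint : ∀ i, Integrable (X i) ℙ := fun i => hint _ _ (hXmeas i) (hXb i)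
  have hXXint : ∀ i j, Integrable (fun ω => X i ω * X j ω) ℙ := by
    intro i j
    refine hint _ ((C i + |m i|) * (C j + |m j|)) ((hXmeas i).mul (hXmeas j)) fun ω => ?_
    rw [abs_mul]
    exact mul_le_mul (hXb i ω) (hXb j ω) (abs_nonneg _) (le_trans (abs_nonneg _) (hXb i ω))
  have hXmean : ∀ i, ∫ ω, X i ω = 0 := by
    intro i
    simp only [hX_def]
    rw [integral_sub (hWint i) (integrable_const _), integral_const]
    simp [hm_def]
  have hWsq_int : ∀ i, Integrable (fun ω => W i ω ^ 2) ℙ := by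
    intro i
    refine hint _ (C i ^ 2) ((hWmeas i).pow_const 2) fun ω => ?_
    rw [abs_pow]
    exact pow_le_pow_left₀ (abs_nonneg _) (hCb i ω) 2
  have hYsq_int : ∀ i, Integrable (fun ω => Y i ω ^ 2) ℙ := by
    intro i
    refine hint _ (CY i ^ 2) ((hYmeas i).pow_const 2) fun ω => ?_
    rw [abs_pow]
    exact pow_le_pow_left₀ (abs_nonneg _) (hCYb i ω) 2
  have hXsq_int : ∀ i, Integrable (fun ω => X i ω ^ 2) ℙ := by
    intro i
    refine hint _ ((C i + |m i|) ^ 2) ((hXmeas i).pow_const 2) fun ω => ?_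
    rw [abs_pow]
    exact pow_le_pow_left₀ (abs_nonneg _) (hXb i ω) 2
  -- second moment bounds
  have hWsq : ∀ i, ∫ ω, W i ω ^ 2 ≤ k ^ 4 := by
    intro i
    have h1 : ∀ ω, W i ω ^ 2 ≤ Y i ω ^ 2 * ((p i)⁻¹) ^ 2 := by
      intro ω
      simp only [hW_def]
      by_cases h : Z i ω = z
      · rw [if_pos h, one_mul, div_eq_mul_inv, mul_pow]
      · rw [if_neg h, zero_mul, zero_div]
        have h0 : (0:ℝ) ≤ Y i ω ^ 2 * ((p i)⁻¹) ^ 2 := by positivity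
        simpa using h0
    calc ∫ ω, W i ω ^ 2
        ≤ ∫ ω, Y i ω ^ 2 * ((p i)⁻¹) ^ 2 :=
          integral_mono (hWsq_int i) ((hYsq_int i).mul_const _) h1
      _ = (∫ ω, Y i ω ^ 2) * ((p i)⁻¹) ^ 2 := integral_mul_const _ _
      _ ≤ k ^ 2 * k ^ 2 := by
          apply mul_le_mul (hYsq i) (pow_le_pow_left₀ (by positivity) (hinvp i) 2)
            (by positivity) (by positivity)
      _ = k ^ 4 := by ring
  have hXsq : ∀ i, ∫ ω, X i ω ^ 2 ≤ k ^ 4 := by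
    intro i
    have hexp : (fun ω => X i ω ^ 2) =
        fun ω => (W i ω ^ 2 - (2 * m i) * W i ω) + m i ^ 2 := by
      funext ω; simp only [hX_def]; ring
    have hb : Integrable (fun ω => (2 * m i) * W i ω) ℙ := (hWint i).const_mul _
    have ha : Integrable (fun ω => W i ω ^ 2 - (2 * m i) * W i ω) ℙ := (hWsq_int i).sub hb
    rw [hexp, integral_add ha (integrable_const _),
      integral_sub (hWsq_int i) hb, integral_const_mul, integral_const]
    have hm : ∫ ω, W i ω = m i := rfl
    rw [hm]
    have := hWsq i
    have hmeas1 : (ℙ : Measure Ω).real (Set.univ : Set Ω) = 1 := by simp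
    rw [hmeas1, smul_eq_mul, one_mul]
    nlinarith [sq_nonneg (m i)]
  -- covariance bounds
  have hc : ∀ i j, ∫ ω, X i ω * X j ω ≤ k ^ 4 * (d i j : ℝ) := by
    intro i j
    by_cases hd : ∃ ℓ, I ℓ i = true ∧ I ℓ j = true
    · have hdij : d i j = 1 := if_pos hd
      rw [hdij, Nat.cast_one, mul_one]
      have hpt : ∀ ω, X i ω * X j ω ≤ (X i ω ^ 2 + X j ω ^ 2) / 2 := fun ω =>
        aux_amgm (X i ω) (X j ω)
      calc ∫ ω, X i ω * X j ω
          ≤ ∫ ω, (X i ω ^ 2 + X j ω ^ 2) / 2 :=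
            integral_mono (hXXint i j) (((hXsq_int i).add (hXsq_int j)).div_const 2) hpt
        _ = ((∫ ω, X i ω ^ 2) + ∫ ω, X j ω ^ 2) / 2 := by
            rw [integral_div, integral_add (hXsq_int i) (hXsq_int j)]
        _ ≤ k ^ 4 := by linarith [hXsq i, hXsq j]
    · have hdij : d i j = 0 := if_neg hd
      rw [hdij, Nat.cast_zero, mul_zero]
      have hdisj : Disjoint (S i) (S j) := by
        rw [Finset.disjoint_left]
        intro ℓ hℓi hℓj
        exact hd ⟨ℓ, (hmemS i ℓ).1 hℓi, (hmemS j ℓ).1 hℓj⟩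
      have hWind : IndepFun (W i) (W j) ℙ := by
        have h1 := hindep.indepFun_finset (S i) (S j) hdisj hZmeas
        have h2 := h1.comp (hGmeas i) (hGmeas j)
        have e1 : (G i) ∘ (fun a (ℓ : ↥(S i)) => Z ℓ a) = W i := funext fun ω => (hWG i ω).symm
        have e2 : (G j) ∘ (fun a (ℓ : ↥(S j)) => Z ℓ a) = W j := funext fun ω => (hWG j ω).symm
        rwa [e1, e2] at h2
      have hXind : IndepFun (X i) (X j) ℙ :=
        hWind.comp (measurable_id.sub (measurable_const (a := m i)))
          (measurable_id.sub (measurable_const (a := m j)))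
      have h0 : ∫ ω, X i ω * X j ω = (∫ ω, X i ω) * ∫ ω, X j ω :=
        hXind.integral_fun_mul_eq_mul_integral (hXint i).aestronglyMeasurable (hXint j).aestronglyMeasurable
      rw [h0, hXmean i, zero_mul]
  -- assemble
  show variance (fun ω => (1 / (n:ℝ)) * ∑ i, W i ω) ℙ ≤ k ^ 4 * Davg / n
  set f : Ω → ℝ := fun ω => (1 / (n:ℝ)) * ∑ i, W i ω with hf_def
  have hfmeas : Measurable f := measurable_const.mul (Finset.measurable_sum _ fun i _ => hWmeas i)
  have hfb : ∀ ω, |f ω| ≤ (1 / (n:ℝ)) * ∑ i, C i := by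
    intro ω
    have hn0 : (0:ℝ) ≤ 1 / (n:ℝ) := by positivity
    calc |f ω| = (1 / (n:ℝ)) * |∑ i, W i ω| := by
          rw [hf_def]; rw [abs_mul, abs_of_nonneg hn0]
      _ ≤ (1 / (n:ℝ)) * ∑ i, |W i ω| := by
          apply mul_le_mul_of_nonneg_left (Finset.abs_sum_le_sum_abs _ _) hn0
      _ ≤ (1 / (n:ℝ)) * ∑ i, C i := by
          apply mul_le_mul_of_nonneg_left (Finset.sum_le_sum fun i _ => hCb i ω) hn0
  have hmem : MemLp f 2 ℙ :=
    MemLp.of_bound hfmeas.aestronglyMeasurable _ (ae_of_all _ fun ω => by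
      simpa [Real.norm_eq_abs] using hfb ω)
  have hmf : ∫ ω, f ω = (1 / (n:ℝ)) * ∑ i, m i := by
    rw [hf_def, integral_const_mul, integral_finset_sum _ fun i _ => hWint i]
  have hfp : ∀ ω, f ω - ∫ ω', f ω' = (1 / (n:ℝ)) * ∑ i, X i ω := by
    intro ω
    rw [hmf, hf_def]
    simp only [hX_def]
    rw [Finset.sum_sub_distrib]
    ring
  have hsq : ∀ ω, (f ω - ∫ ω', f ω') ^ 2 = (1 / (n:ℝ)) ^ 2 * ∑ i, ∑ j, X i ω * X j ω := by
    intro ω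
    rw [hfp ω, mul_pow, pow_two ((Finset.univ : Finset (Fin n)).sum fun i => X i ω),
      Finset.sum_mul_sum]
  have hvar : variance f ℙ = (1 / (n:ℝ)) ^ 2 * ∑ i, ∑ j, ∫ ω, X i ω * X j ω := by
    rw [show variance f ℙ = ∫ ω, (((f - fun _ => ∫ ω', f ω') : Ω → ℝ) ^ (2:ℕ)) ω from
      variance_eq_integral hfmeas.aemeasurable]
    have h5 : ∫ ω, (((f - fun _ => ∫ ω', f ω') : Ω → ℝ) ^ (2:ℕ)) ω =
        ∫ ω, (1 / (n:ℝ)) ^ 2 * ∑ i, ∑ j, X i ω * X j ω := by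
      congr 1
      funext ω
      simp only [Pi.pow_apply, Pi.sub_apply]
      exact hsq ω
    rw [h5, integral_const_mul]
    congr 1
    rw [integral_finset_sum _ (fun i _ => integrable_finset_sum _ fun j _ => hXXint i j)]
    exact Finset.sum_congr rfl fun i _ => integral_finset_sum _ fun j _ => hXXint i j
  rw [hvar]
  have hsum : ∑ i, ∑ j, ∫ ω, X i ω * X j ω ≤ ∑ i, ∑ j, k ^ 4 * (d i j : ℝ) :=
    Finset.sum_le_sum fun i _ => Finset.sum_le_sum fun j _ => hc i j
  have hDavg : Davg = (∑ i, ∑ j, (d i j : ℝ)) / n := rfl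
  calc (1 / (n:ℝ)) ^ 2 * ∑ i, ∑ j, ∫ ω, X i ω * X j ω
      ≤ (1 / (n:ℝ)) ^ 2 * ∑ i, ∑ j, k ^ 4 * (d i j : ℝ) :=
        mul_le_mul_of_nonneg_left hsum (by positivity)
    _ = k ^ 4 * Davg / n := by
        rw [hDavg]
        simp only [← Finset.mul_sum]
        exact aux_alg _ _ _
end

section
/- In the Erdős–Rényi-type random interference model where, independently for each ordered pair i ≠ j of n units, unit j is placed in the interference set G_i with probability q = (a − 1)/(n − 1) (and each unit always interferes with itself), the expected average interference dependence is E[D_avg] = n − (n−1)(1 − q)ⁿ (1 + q)^{n−2}. -/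
open MeasureTheory ProbabilityTheory Finset


lemma groups_meas_biInter {Ω ι κ β : Type*} [MeasurableSpace Ω] {μ : Measure Ω}
    [IsProbabilityMeasure μ] [mβ : MeasurableSpace β] {f : ι → Ω → β}
    (hf : ∀ p, Measurable (f p))
    (hindep : iIndepFun f μ)
    (g : κ → Finset ι) (hdisj : ∀ k k', k ≠ k' → Disjoint (g k) (g k'))
    (E : κ → Set Ω)
    (hE : ∀ k, MeasurableSet[⨆ p ∈ (g k : Set ι), MeasurableSpace.comap (f p) mβ] (E k))
    (s : Finset κ) :
    μ (⋂ k ∈ s, E k) = ∏ k ∈ s, μ (E k) := by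
  classical
  induction s using Finset.induction with
  | empty => simp
  | @insert k s hk ih =>
    have hST : Disjoint (↑(g k) : Set ι) (↑(s.biUnion g) : Set ι) := by
      rw [Finset.disjoint_coe]
      exact Finset.disjoint_biUnion_right _ _ _ |>.mpr fun k' hk' =>
        hdisj k k' (fun h => hk (h ▸ hk'))
    have hIndep : Indep (⨆ p ∈ (↑(g k) : Set ι), MeasurableSpace.comap (f p) mβ)
        (⨆ p ∈ (↑(s.biUnion g) : Set ι), MeasurableSpace.comap (f p) mβ) μ :=
      indep_iSup_of_disjoint (fun p => (hf p).comap_le) hindep.iIndep hST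
    have hmeas2 : MeasurableSet[⨆ p ∈ (↑(s.biUnion g) : Set ι),
        MeasurableSpace.comap (f p) mβ] (⋂ ℓ ∈ s, E ℓ) := by
      refine MeasurableSet.biInter s.countable_toSet fun ℓ hℓ => ?_
      have hsub : (↑(g ℓ) : Set ι) ⊆ ↑(s.biUnion g) := by
        intro p hp
        simp only [Finset.coe_biUnion, Set.mem_iUnion]
        exact ⟨ℓ, hℓ, hp⟩
      exact MeasurableSpace.le_def.mp (biSup_mono hsub) _ (hE ℓ)
    rw [Finset.set_biInter_insert, Finset.prod_insert hk, ← ih]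
    exact (Indep_iff _ _ _).mp hIndep _ _ (hE k) hmeas2


lemma pair_prob {Ω : Type*} [MeasureSpace Ω] [IsProbabilityMeasure (ℙ : Measure Ω)]
    (n : ℕ) (q : ℝ) (hq0 : 0 ≤ q) (hq1 : q ≤ 1)
    (B : Fin n × Fin n → Ω → Bool) (hBmeas : ∀ p, Measurable (B p))
    (hindep : iIndepFun B ℙ)
    (hBp : ∀ p : Fin n × Fin n, p.1 ≠ p.2 → ℙ {ω | B p ω = true} = ENNReal.ofReal q)
    (i j : Fin n) (hij : i ≠ j) :
    (ℙ {ω | ∃ ℓ, (decide (ℓ = i) || B (ℓ, i) ω) = true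
        ∧ (decide (ℓ = j) || B (ℓ, j) ω) = true}).toReal
      = 1 - (1 - q) ^ n * (1 + q) ^ (n - 2) := by
  classical
  have h2n : 2 ≤ n := by
    have h := Fintype.one_lt_card_iff_nontrivial.mpr ⟨⟨i, j, hij⟩⟩
    simpa [Nat.succ_le_iff] using h
  set A : Set Ω := {ω | ∃ ℓ, (decide (ℓ = i) || B (ℓ, i) ω) = true
        ∧ (decide (ℓ = j) || B (ℓ, j) ω) = true} with hA
  set F : Fin n → Set Ω := fun ℓ => {ω | ¬((decide (ℓ = i) || B (ℓ, i) ω) = true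
        ∧ (decide (ℓ = j) || B (ℓ, j) ω) = true)} with hF
  -- measurability of the sets {ω | decide _ || B p ω = true}
  have hXmeas : ∀ (p : Fin n × Fin n) (c : Bool), MeasurableSet {ω | (c || B p ω) = true} :=
    fun p c => (hBmeas p) (MeasurableSet.of_discrete (s := {b | (c || b) = true}))
  have hFmeas : ∀ ℓ, MeasurableSet (F ℓ) := by
    intro ℓ
    have : F ℓ = ({ω | (decide (ℓ = i) || B (ℓ, i) ω) = true}
        ∩ {ω | (decide (ℓ = j) || B (ℓ, j) ω) = true})ᶜ := by
      ext ω; simp [hF]; try tauto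
    rw [this]
    exact ((hXmeas _ _).inter (hXmeas _ _)).compl
  have hAmeas : MeasurableSet A := by
    have : A = ⋃ ℓ, ({ω | (decide (ℓ = i) || B (ℓ, i) ω) = true}
        ∩ {ω | (decide (ℓ = j) || B (ℓ, j) ω) = true}) := by
      ext ω; simp [hA]
    rw [this]
    exact MeasurableSet.iUnion fun ℓ => (hXmeas _ _).inter (hXmeas _ _)
  have hAc : Aᶜ = ⋂ ℓ, F ℓ := by
    ext ω; simp [hA, hF]
  -- grouping
  set g : Fin n → Finset (Fin n × Fin n) := fun ℓ => {(ℓ, i), (ℓ, j)} with hg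
  have hdisj : ∀ k k', k ≠ k' → Disjoint (g k) (g k') := by
    intro k k' hkk'
    rw [Finset.disjoint_left]
    intro p hp hp'
    simp only [hg, Finset.mem_insert, Finset.mem_singleton] at hp hp'
    apply hkk'
    rcases hp with h | h <;> rcases hp' with h' | h' <;>
      simpa using congrArg Prod.fst (h.symm.trans h')
  have hE : ∀ ℓ, MeasurableSet[⨆ p ∈ ((g ℓ) : Set (Fin n × Fin n)),
      MeasurableSpace.comap (B p) inferInstance] (F ℓ) := by
    intro ℓ
    have hle : ∀ p ∈ ((g ℓ) : Set (Fin n × Fin n)),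
        MeasurableSpace.comap (B p) inferInstance ≤ ⨆ p ∈ ((g ℓ) : Set (Fin n × Fin n)),
          MeasurableSpace.comap (B p) inferInstance := fun p hp => le_biSup (f := fun p => MeasurableSpace.comap (B p) (inferInstance : MeasurableSpace Bool)) hp
    have h1 : ((ℓ, i) : Fin n × Fin n) ∈ ((g ℓ) : Set (Fin n × Fin n)) := by simp [hg]
    have h2 : ((ℓ, j) : Fin n × Fin n) ∈ ((g ℓ) : Set (Fin n × Fin n)) := by simp [hg]
    have m1 : MeasurableSet[MeasurableSpace.comap (B (ℓ, i)) inferInstance]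
        {ω | (decide (ℓ = i) || B (ℓ, i) ω) = true} :=
      ⟨{b | (decide (ℓ = i) || b) = true}, trivial, rfl⟩
    have m2 : MeasurableSet[MeasurableSpace.comap (B (ℓ, j)) inferInstance]
        {ω | (decide (ℓ = j) || B (ℓ, j) ω) = true} :=
      ⟨{b | (decide (ℓ = j) || b) = true}, trivial, rfl⟩
    have : F ℓ = ({ω | (decide (ℓ = i) || B (ℓ, i) ω) = true}
        ∩ {ω | (decide (ℓ = j) || B (ℓ, j) ω) = true})ᶜ := by
      ext ω; simp [hF]; try tauto
    rw [this]
    exact (MeasurableSet.inter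
      (MeasurableSpace.le_def.mp (hle _ h1) _ m1)
      (MeasurableSpace.le_def.mp (hle _ h2) _ m2)).compl
  have hprod : ℙ (⋂ ℓ, F ℓ) = ∏ ℓ, ℙ (F ℓ) := by
    have := groups_meas_biInter hBmeas hindep g hdisj F hE Finset.univ
    simpa using this
  have hX' : ∀ p : Fin n × Fin n, MeasurableSet {ω | B p ω = true} :=
    fun p => (hBmeas p) (MeasurableSet.of_discrete (s := {b | b = true}))
  set r := ENNReal.ofReal q with hr
  have hFi : ℙ (F i) = 1 - r := by
    have he : F i = {ω | B (i, j) ω = true}ᶜ := by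
      ext ω; simp [hF, hij]
    rw [he, prob_compl_eq_one_sub (hX' _), hBp (i, j) hij]
  have hFj : ℙ (F j) = 1 - r := by
    have he : F j = {ω | B (j, i) ω = true}ᶜ := by
      ext ω; simp [hF, Ne.symm hij]
    rw [he, prob_compl_eq_one_sub (hX' _), hBp (j, i) (Ne.symm hij)]
  have hFo : ∀ ℓ, ¬(ℓ = i ∨ ℓ = j) → ℙ (F ℓ) = 1 - r * r := by
    intro ℓ hℓ
    push_neg at hℓ
    have he : F ℓ = ({ω | B (ℓ, i) ω = true} ∩ {ω | B (ℓ, j) ω = true})ᶜ := by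
      ext ω; simp [hF, hℓ.1, hℓ.2]
    rw [he, prob_compl_eq_one_sub ((hX' _).inter (hX' _))]
    have hind2 : IndepFun (B (ℓ, i)) (B (ℓ, j)) ℙ :=
      hindep.indepFun (by simp [Prod.ext_iff, hij])
    have hmul := hind2.measure_inter_preimage_eq_mul (s := {true}) (t := {true})
      MeasurableSet.of_discrete MeasurableSet.of_discrete
    have hs1 : B (ℓ, i) ⁻¹' {true} = {ω | B (ℓ, i) ω = true} := rfl
    have hs2 : B (ℓ, j) ⁻¹' {true} = {ω | B (ℓ, j) ω = true} := rfl
    rw [hs1, hs2] at hmul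
    rw [hmul, hBp (ℓ, i) (by simpa using hℓ.1), hBp (ℓ, j) (by simpa using hℓ.2)]
  have hval : ∀ ℓ, ℙ (F ℓ) = if ℓ = i ∨ ℓ = j then 1 - r else 1 - r * r := by
    intro ℓ
    by_cases h : ℓ = i ∨ ℓ = j
    · rw [if_pos h]
      rcases h with rfl | rfl
      · exact hFi
      · exact hFj
    · rw [if_neg h]; exact hFo ℓ h
  have hfilter : Finset.univ.filter (fun ℓ : Fin n => ℓ = i ∨ ℓ = j) = {i, j} := by
    ext ℓ; simp
  have hcard2 : (Finset.univ.filter (fun ℓ : Fin n => ℓ = i ∨ ℓ = j)).card = 2 := by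
    rw [hfilter, Finset.card_insert_of_notMem (by simp [hij]), Finset.card_singleton]
  have hcardc : (Finset.univ.filter (fun ℓ : Fin n => ¬(ℓ = i ∨ ℓ = j))).card = n - 2 := by
    have h := Finset.card_filter_add_card_filter_not
      (s := (Finset.univ : Finset (Fin n))) (p := fun ℓ => ℓ = i ∨ ℓ = j)
    simp only [Finset.card_univ, Fintype.card_fin] at h
    omega
  have hprodval : ∏ ℓ, ℙ (F ℓ) = (1 - r) ^ 2 * (1 - r * r) ^ (n - 2) := by
    calc ∏ ℓ, ℙ (F ℓ) = ∏ ℓ, (if ℓ = i ∨ ℓ = j then 1 - r else 1 - r * r) :=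
          Finset.prod_congr rfl fun ℓ _ => hval ℓ
      _ = (1 - r) ^ 2 * (1 - r * r) ^ (n - 2) := by
          rw [Finset.prod_ite, Finset.prod_const, Finset.prod_const, hcard2, hcardc]
  have h1q : (0:ℝ) ≤ 1 - q := by linarith
  have h1qq : (0:ℝ) ≤ 1 - q * q := by nlinarith
  set P : ℝ := (1 - q) ^ 2 * (1 - q * q) ^ (n - 2) with hPdef
  have hPnn : 0 ≤ P := mul_nonneg (pow_nonneg h1q 2) (pow_nonneg h1qq _)
  have hPle : P ≤ 1 := by
    have h1 : (1 - q) ^ 2 ≤ 1 := pow_le_one₀ h1q (by linarith)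
    have h2 : (1 - q * q) ^ (n - 2) ≤ 1 := pow_le_one₀ h1qq (by nlinarith)
    nlinarith [pow_nonneg h1qq (n - 2), pow_nonneg h1q 2]
  have e1 : (1:ENNReal) - r = ENNReal.ofReal (1 - q) := by
    rw [ENNReal.ofReal_sub _ hq0, ENNReal.ofReal_one]
  have e2 : (1:ENNReal) - r * r = ENNReal.ofReal (1 - q * q) := by
    rw [ENNReal.ofReal_sub _ (mul_nonneg hq0 hq0), ENNReal.ofReal_one, ENNReal.ofReal_mul hq0]
  have hP : ℙ (⋂ ℓ, F ℓ) = ENNReal.ofReal P := by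
    rw [hprod, hprodval, e1, e2, ← ENNReal.ofReal_pow h1q, ← ENNReal.ofReal_pow h1qq,
      ← ENNReal.ofReal_mul (pow_nonneg h1q 2)]
  have hPA : ℙ A = 1 - ENNReal.ofReal P := by
    have h := prob_compl_eq_one_sub (μ := ℙ) hAmeas
    rw [hAc, hP] at h
    rw [h, ENNReal.sub_sub_cancel ENNReal.one_ne_top prob_le_one]
  have hPeq : P = (1 - q) ^ n * (1 + q) ^ (n - 2) := by
    have hfac : 1 - q * q = (1 - q) * (1 + q) := by ring
    rw [hPdef, hfac, mul_pow, ← mul_assoc, ← pow_add]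
    congr 2
    omega
  rw [hPA, ENNReal.toReal_sub_of_le (ENNReal.ofReal_le_one.mpr hPle) ENNReal.one_ne_top,
    ENNReal.toReal_one, ENNReal.toReal_ofReal hPnn, hPeq]
theorem stmt_18 {Ω : Type*} [MeasureSpace Ω] [IsProbabilityMeasure (ℙ : Measure Ω)]
    (n : ℕ) (hn : 1 ≤ n) (a q : ℝ) (hq : q = (a - 1) / (n - 1))
    (hq0 : 0 ≤ q) (hq1 : q ≤ 1)
    (B : Fin n × Fin n → Ω → Bool) (hBmeas : ∀ p, Measurable (B p))
    (hindep : iIndepFun B ℙ)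
    (hBp : ∀ p : Fin n × Fin n, p.1 ≠ p.2 →
      ℙ {ω | B p ω = true} = ENNReal.ofReal q) :
    let I : Fin n → Fin n → Ω → Bool := fun ℓ i ω => ℓ = i || B (ℓ, i) ω
    let d : Fin n → Fin n → Ω → ℝ := fun i j ω =>
      if ∃ ℓ, I ℓ i ω = true ∧ I ℓ j ω = true then 1 else 0
    (∫ ω, (∑ i, ∑ j, d i j ω) / n) =
      n - (n - 1) * (1 - q) ^ n * (1 + q) ^ (n - 2) := by
  intro I d
  classical
  have hn0 : (n : ℝ) ≠ 0 := by
    exact Nat.cast_ne_zero.mpr (by omega)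
  set A : Fin n → Fin n → Set Ω :=
    fun i j => {ω | ∃ ℓ, I ℓ i ω = true ∧ I ℓ j ω = true} with hA
  have hImeas : ∀ ℓ i, Measurable (I ℓ i) := fun ℓ i =>
    (Measurable.of_discrete (f := fun b => (decide (ℓ = i) || b))).comp (hBmeas (ℓ, i))
  have hAmeas : ∀ i j, MeasurableSet (A i j) := by
    intro i j
    have : A i j = ⋃ ℓ, ({ω | I ℓ i ω = true} ∩ {ω | I ℓ j ω = true}) := by
      ext ω; simp [hA]
    rw [this]
    exact MeasurableSet.iUnion fun ℓ =>
      ((hImeas ℓ i) (MeasurableSet.of_discrete (s := {b | b = true}))).inter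
        ((hImeas ℓ j) (MeasurableSet.of_discrete (s := {b | b = true})))
  have hd : ∀ i j, d i j = (A i j).indicator (fun _ => (1 : ℝ)) := by
    intro i j
    funext ω
    by_cases h : ω ∈ A i j
    · rw [Set.indicator_of_mem h]
      exact if_pos h
    · rw [Set.indicator_of_notMem h]
      exact if_neg h
  have hInt : ∀ i j, Integrable (d i j) ℙ := by
    intro i j
    rw [hd]
    exact (integrable_const 1).indicator (hAmeas i j)
  have hint : ∀ i j, ∫ ω, d i j ω = (ℙ (A i j)).toReal := by
    intro i j
    rw [hd, integral_indicator_const _ (hAmeas i j), smul_eq_mul, mul_one]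
    rfl
  set P : ℝ := (1 - q) ^ n * (1 + q) ^ (n - 2) with hP
  have hval : ∀ i j, ∫ ω, d i j ω = if i = j then 1 else 1 - P := by
    intro i j
    rw [hint]
    by_cases h : i = j
    · subst h
      rw [if_pos rfl]
      have : A i i = Set.univ := by
        rw [Set.eq_univ_iff_forall]
        intro ω
        exact ⟨i, by simp [I], by simp [I]⟩
      rw [this]
      simp
    · rw [if_neg h]
      have hset : A i j = {ω | ∃ ℓ, (decide (ℓ = i) || B (ℓ, i) ω) = true
          ∧ (decide (ℓ = j) || B (ℓ, j) ω) = true} := rfl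
      rw [hset]
      exact pair_prob n q hq0 hq1 B hBmeas hindep hBp i j h
  have hswap : ∫ ω, (∑ i, ∑ j, d i j ω) = ∑ i, ∑ j, ∫ ω, d i j ω := by
    rw [integral_finset_sum _ (fun i _ => integrable_finset_sum _ (fun j _ => hInt i j))]
    exact Finset.sum_congr rfl fun i _ => integral_finset_sum _ (fun j _ => hInt i j)
  have hrow : ∀ i : Fin n, ∑ j, ∫ ω, d i j ω = (n : ℝ) * (1 - P) + P := by
    intro i
    have : ∀ j : Fin n, ∫ ω, d i j ω = (1 - P) + (if i = j then P else 0) := by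
      intro j
      rw [hval]
      by_cases h : i = j <;> simp [h]
    rw [Finset.sum_congr rfl fun j _ => this j, Finset.sum_add_distrib,
      Finset.sum_const, Finset.card_univ, Fintype.card_fin, nsmul_eq_mul,
      Finset.sum_ite_eq univ i (fun _ => P)]
    simp
  rw [integral_div, hswap, Finset.sum_congr rfl fun i _ => hrow i, Finset.sum_const,
    Finset.card_univ, Fintype.card_fin, nsmul_eq_mul]
  field_simp
  ring
end
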